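/- Let S_t = Σ_{i=1}^t Z_i where Z_1, Z_2, … are i.i.d. Gaussian with mean s, 0 < s < ∞, and variance σ², 0 < σ² < ∞. Let 0 < ℓ < ∞ and μ = inf{t ≥ 1 : S_t ≥ ℓ}. Then for every z with 0 ≤ z < ℓ/s, P(μ < ℓ/s − z) ≤ exp( − s² z² / (2σ² (ℓ/s − z)) ). -/

import Mathlib

/-! For `t ≥ 0` with `E exp (t Z) ≥ 1`, the process `exp (t S_k)` is a nonnegative submartingale,
so Doob's maximal inequality bounds the probability that the walk reaches `ℓ` by time `n` by
`exp (-t ℓ) E exp (t S_n) = exp (-t ℓ + n (s t + σ² t² / 2))`. By the strong law the walk crosses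
`ℓ` almost surely, so almost surely `μ` is a genuine crossing time rather than `sInf ∅ = 0`, and
`{μ < T}` lies in that event with `n = ⌊T⌋`. The tilt `t = s z / (σ² T)` is the minimiser of
the exponent at `n = T`, where it equals `-s² z² / (2 σ² T)`. -/

open MeasureTheory ProbabilityTheory Filter ENNReal

open Finset Real

namespace ProbabilityTheory

variable {Ω : Type*} [MeasurableSpace Ω] {P : Measure Ω} {Z : ℕ → Ω → ℝ}

theorem iIndepFun.submartingale_exp_mul_sum_range (hmeas : ∀ i, Measurable (Z i))
    (hindep : iIndepFun Z P) {t : ℝ} (hmgf : ∀ i, 1 ≤ mgf (Z i) P t) :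
    Submartingale (fun k ω ↦ exp (t * ∑ i ∈ range (k + 1), Z i ω))
      (Filtration.natural Z fun i ↦ (hmeas i).stronglyMeasurable) P := by
  have := hindep.isProbabilityMeasure
  set ℱ := Filtration.natural Z fun i ↦ (hmeas i).stronglyMeasurable
  have hint_step : ∀ i, Integrable (fun ω ↦ exp (t * Z i ω)) P :=
    fun i ↦ mgf_pos_iff.1 (zero_lt_one.trans_le (hmgf i))
  have hint : ∀ k, Integrable (fun ω ↦ exp (t * ∑ i ∈ range k, Z i ω)) P := fun k ↦ by
    simpa only [Finset.sum_apply] using hindep.integrable_exp_mul_sum hmeas fun i _ ↦ hint_step i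
  have hadapted : StronglyAdapted ℱ fun k ω ↦ exp (t * ∑ i ∈ range (k + 1), Z i ω) := fun k ↦
    (measurable_const.mul (Finset.measurable_sum _ fun i hi ↦
      ((Filtration.stronglyAdapted_natural _ i).mono
        (ℱ.mono (Nat.lt_succ_iff.1 (mem_range.1 hi)))).measurable)).exp.stronglyMeasurable
  refine submartingale_nat hadapted (fun k ↦ hint (k + 1)) fun k ↦ ?_
  have hsplit : (fun ω ↦ exp (t * ∑ i ∈ range (k + 1 + 1), Z i ω))
      = (fun ω ↦ exp (t * ∑ i ∈ range (k + 1), Z i ω)) * fun ω ↦ exp (t * Z (k + 1) ω) := by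
    ext ω; rw [sum_range_succ _ (k + 1), mul_add, exp_add]; rfl
  have hpull := condExp_mul_of_stronglyMeasurable_left (hadapted k) (hsplit ▸ hint (k + 2))
    (hint_step (k + 1))
  have hindep_step : P[fun ω ↦ exp (t * Z (k + 1) ω) | ℱ k] =ᵐ[P] fun _ ↦ mgf (Z (k + 1)) P t :=
    condExp_indep_eq (hmeas (k + 1)).comap_le (ℱ.le k)
      ((measurable_const_mul t).exp.comp (comap_measurable (Z (k + 1)))).stronglyMeasurable
      (hindep.indep_comap_natural_of_lt _ (lt_add_one k))
  filter_upwards [hpull, hindep_step] with ω hω hω'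
  rw [hsplit, hω, Pi.mul_apply, hω']
  exact le_mul_of_one_le_right (exp_pos _).le (hmgf _)

theorem iIndepFun.measure_exists_sum_range_ge_le (hmeas : ∀ i, Measurable (Z i))
    (hindep : iIndepFun Z P) {t : ℝ} (ht : 0 ≤ t) (hmgf : ∀ i, 1 ≤ mgf (Z i) P t) (ℓ : ℝ)
    (n : ℕ) :
    P {ω | ∃ k ∈ Icc 1 n, ℓ ≤ ∑ i ∈ range k, Z i ω}
      ≤ ENNReal.ofReal (exp (-(t * ℓ)) * mgf (∑ i ∈ range n, Z i) P t) := by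
  have := hindep.isProbabilityMeasure
  obtain _ | m := n
  · simp
  set F := fun k ω ↦ exp (t * ∑ i ∈ range (k + 1), Z i ω)
  have hmart := hindep.submartingale_exp_mul_sum_range hmeas hmgf
  set ε := Real.toNNReal (exp (t * ℓ))
  have hε : (ε : ℝ) = exp (t * ℓ) := Real.coe_toNNReal _ (exp_pos _).le
  set A := {ω | (ε : ℝ) ≤ (range (m + 1)).sup' nonempty_range_add_one fun k ↦ F k ω}
  have hA : {ω | ∃ k ∈ Icc 1 (m + 1), ℓ ≤ ∑ i ∈ range k, Z i ω} ⊆ A := by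
    rintro ω ⟨k, hk, hℓ⟩
    obtain ⟨hk1, hkm⟩ := mem_Icc.1 hk
    obtain ⟨j, rfl⟩ := Nat.exists_eq_add_of_le' hk1
    refine le_sup'_of_le (fun k ↦ F k ω) (mem_range.2 (show j < m + 1 by omega)) ?_
    rw [hε]
    exact exp_le_exp.2 (mul_le_mul_of_nonneg_left hℓ ht)
  have hdoob : ENNReal.ofReal (exp (t * ℓ)) * P A
      ≤ ENNReal.ofReal (mgf (∑ i ∈ range (m + 1), Z i) P t) := by
    refine (maximal_ineq hmart (fun k ω ↦ (exp_pos _).le) m).trans (ENNReal.ofReal_le_ofReal ?_)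
    simp only [mgf, Finset.sum_apply]
    exact setIntegral_le_integral (hmart.integrable m) (ae_of_all _ fun ω ↦ (exp_pos _).le)
  calc P {ω | ∃ k ∈ Icc 1 (m + 1), ℓ ≤ ∑ i ∈ range k, Z i ω}
      ≤ ENNReal.ofReal (exp (-(t * ℓ))) * (ENNReal.ofReal (exp (t * ℓ)) * P A) := by
        rw [← mul_assoc, ← ENNReal.ofReal_mul (exp_pos _).le, ← exp_add, neg_add_cancel, exp_zero,
          ENNReal.ofReal_one, one_mul]
        exact measure_mono hA
    _ ≤ _ := by
        rw [ENNReal.ofReal_mul (exp_pos _).le]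
        gcongr

theorem iIndepFun.ae_tendsto_sum_range_atTop (hindep : iIndepFun Z P)
    (hident : ∀ i, IdentDistrib (Z i) (Z 0) P P) (hint : Integrable (Z 0) P) (hpos : 0 < P[Z 0]) :
    ∀ᵐ ω ∂P, Tendsto (fun n ↦ ∑ i ∈ range n, Z i ω) atTop atTop := by
  filter_upwards [strong_law_ae_real Z hint (fun i j hij ↦ hindep.indepFun hij) hident] with ω hω
  exact tendsto_natCast_atTop_atTop.num hpos hω

theorem iIndepFun.ae_tendsto_sum_range_atTop_of_map_eq_gaussianReal
    (hmeas : ∀ i, Measurable (Z i)) (hindep : iIndepFun Z P) {m : ℝ} (hm : 0 < m) {v : NNReal}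
    (hdist : ∀ i, P.map (Z i) = gaussianReal m v) :
    ∀ᵐ ω ∂P, Tendsto (fun n ↦ ∑ i ∈ range n, Z i ω) atTop atTop := by
  have hident : ∀ i, IdentDistrib (Z i) id P (gaussianReal m v) := fun i ↦
    ⟨(hmeas i).aemeasurable, aemeasurable_id, by rw [hdist i, Measure.map_id]⟩
  exact hindep.ae_tendsto_sum_range_atTop (fun i ↦ (hident i).trans (hident 0).symm)
    ((hident 0).integrable_iff.2 (memLp_one_iff_integrable.1 (memLp_id_gaussianReal 1)))
    (by simpa only [(hident 0).integral_eq, id_eq, integral_id_gaussianReal])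

theorem mgf_sum_range_of_map_eq_gaussianReal (hmeas : ∀ i, Measurable (Z i))
    (hindep : iIndepFun Z P) {m : ℝ} {v : NNReal} (hdist : ∀ i, P.map (Z i) = gaussianReal m v)
    (n : ℕ) (t : ℝ) :
    mgf (∑ i ∈ range n, Z i) P t = exp (n * (m * t + v * t ^ 2 / 2)) := by
  rw [hindep.mgf_sum hmeas, prod_congr rfl fun i _ ↦ mgf_gaussianReal (hdist i) t, prod_const,
    card_range, ← exp_nat_mul]

end ProbabilityTheory

theorem passage_time_lower_deviation_general
    {Ω : Type*} [MeasureSpace Ω] [IsProbabilityMeasure (ℙ : Measure Ω)]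
    (Z : ℕ → Ω → ℝ)
    (hmeas : ∀ i, Measurable (Z i))
    (hindep : iIndepFun Z ℙ)
    (s σ : ℝ) (hs : 0 < s) (hσ : 0 < σ)
    (hdist : ∀ i, Measure.map (Z i) ℙ = gaussianReal s (Real.toNNReal (σ ^ 2)))
    (ℓ : ℝ)
    (S : ℕ → Ω → ℝ) (hS : ∀ t ω, S t ω = ∑ i ∈ Finset.range t, Z i ω)
    (μ : Ω → ℕ) (hμ : ∀ ω, μ ω = sInf {t : ℕ | 1 ≤ t ∧ ℓ ≤ S t ω}) :
    ∀ z : ℝ, 0 ≤ z → z < ℓ / s →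
      ℙ {ω | (μ ω : ℝ) < ℓ / s - z}
        ≤ ENNReal.ofReal (Real.exp (-(s ^ 2 * z ^ 2) / (2 * σ ^ 2 * (ℓ / s - z)))) := by
  intro z hz hzT
  set T := ℓ / s - z with hT
  have hT0 : 0 < T := sub_pos.2 hzT
  set t := s * z / (σ ^ 2 * T)
  have ht : 0 ≤ t := by positivity
  have hσ2 : ((σ ^ 2).toNNReal : ℝ) = σ ^ 2 := Real.coe_toNNReal _ (sq_nonneg σ)
  have hsub : {ω | (μ ω : ℝ) < T} ≤ᵐ[ℙ] {ω | ∃ k ∈ Icc 1 ⌊T⌋₊, ℓ ≤ ∑ i ∈ range k, Z i ω} := by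
    filter_upwards [hindep.ae_tendsto_sum_range_atTop_of_map_eq_gaussianReal hmeas hs hdist]
      with ω hω hlt
    have hcross : {k : ℕ | 1 ≤ k ∧ ℓ ≤ S k ω}.Nonempty :=
      ((hω.eventually_ge_atTop ℓ).and (eventually_ge_atTop 1)).exists.imp
        fun k hk ↦ ⟨hk.2, (hS k ω).symm ▸ hk.1⟩
    obtain ⟨hμ1, hμℓ⟩ : 1 ≤ μ ω ∧ ℓ ≤ S (μ ω) ω := hμ ω ▸ Nat.sInf_mem hcross
    exact ⟨μ ω, mem_Icc.2 ⟨hμ1, Nat.le_floor hlt.le⟩, hS (μ ω) ω ▸ hμℓ⟩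
  have hexponent : -(t * ℓ) + ⌊T⌋₊ * (s * t + σ ^ 2 * t ^ 2 / 2)
      ≤ -(s ^ 2 * z ^ 2) / (2 * σ ^ 2 * T) := calc
    _ ≤ -(t * ℓ) + T * (s * t + σ ^ 2 * t ^ 2 / 2) := by
      gcongr
      exact Nat.floor_le hT0.le
    _ = _ := by
      simp only [t, hT]
      field_simp
      ring
  calc ℙ {ω | (μ ω : ℝ) < T}
      ≤ ℙ {ω | ∃ k ∈ Icc 1 ⌊T⌋₊, ℓ ≤ ∑ i ∈ range k, Z i ω} := measure_mono_ae hsub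
    _ ≤ ENNReal.ofReal (exp (-(t * ℓ)) * mgf (∑ i ∈ range ⌊T⌋₊, Z i) ℙ t) :=
      hindep.measure_exists_sum_range_ge_le hmeas ht
        (fun i ↦ (mgf_gaussianReal (hdist i) t).symm ▸ one_le_exp (by positivity)) ℓ _
    _ ≤ _ := by
      rw [mgf_sum_range_of_map_eq_gaussianReal hmeas hindep hdist, hσ2, ← exp_add]
      exact ENNReal.ofReal_le_ofReal (exp_le_exp.2 hexponent)

/-- **Lemma 1.i, lower-deviation bound.** For a Gaussian random walk `S` with i.i.d.
increments of mean `s > 0` and variance `σ² > 0`, the first-passage time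
`μ = inf{t ≥ 1 : S_t ≥ ℓ}` over a level `ℓ > 0` satisfies, for `0 ≤ z < ℓ/s`,
`P(μ < ℓ/s − z) ≤ exp(−s²z²/(2σ²(ℓ/s − z)))`. -/
theorem passage_time_lower_deviation
    {Ω : Type*} [MeasureSpace Ω] [IsProbabilityMeasure (ℙ : Measure Ω)]
    (Z : ℕ → Ω → ℝ)
    (hmeas : ∀ i, Measurable (Z i))
    (hindep : iIndepFun Z ℙ)
    (s σ : ℝ) (hs : 0 < s) (hσ : 0 < σ)
    (hdist : ∀ i, Measure.map (Z i) ℙ = gaussianReal s (Real.toNNReal (σ ^ 2)))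
    (ℓ : ℝ) (hℓ : 0 < ℓ)
    (S : ℕ → Ω → ℝ) (hS : ∀ t ω, S t ω = ∑ i ∈ Finset.range t, Z i ω)
    (μ : Ω → ℕ) (hμ : ∀ ω, μ ω = sInf {t : ℕ | 1 ≤ t ∧ ℓ ≤ S t ω}) :
    ∀ z : ℝ, 0 ≤ z → z < ℓ / s →
      ℙ {ω | (μ ω : ℝ) < ℓ / s - z}
        ≤ ENNReal.ofReal (Real.exp (-(s ^ 2 * z ^ 2) / (2 * σ ^ 2 * (ℓ / s - z)))) :=
  passage_time_lower_deviation_general Z hmeas hindep s σ hs hσ hdist ℓ S hS μ hμ
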